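/- arXiv:2309.17049 — 2 statements merged into one kernel-verified Lean document; each statement's English description precedes it below -/
import Mathlib

section
/- Let $H$ be a $(2,d)$-hypergraph and let $U_1, U_2, S_1, \dots, S_b$ be pairwise incompatible subedges of $H$ such that: (1) $U_1 \cap U_2 = \emptyset$; (2) each $S_j$ intersects both $U_1$ and $U_2$; (3) for all distinct $i,j \in [b]$, $U_1 \cap S_i \cap S_j = \emptyset$ and $U_2 \cap S_i \cap S_j = \emptyset$. Let $e_1, \dots, e_r \in E(H)$ be edges none of which contains $U_1$ or $U_2$, such that $W = \bigcup_{i=1}^r e_i$ is a $(U_1, U_2)$-separator. Then $r \geq b/(2d)$. -/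
open Finset

open scoped Classical

variable {α : Type*}

structure Hypergraph' (α : Type*) where
  verts : Finset α
  edges : Finset (Finset α)
  edge_sub : ∀ e ∈ edges, e ⊆ verts

namespace Hypergraph'

/-- `U` is a subedge of `H`: it is contained in some hyperedge. -/
def IsSubedge (H : Hypergraph' α) (U : Finset α) : Prop := ∃ e ∈ H.edges, U ⊆ e

/-- `H` is a `(2,d)`-hypergraph: any two distinct edges intersect in at most `d` vertices. -/
def Is2dHypergraph (H : Hypergraph' α) (d : ℕ) : Prop :=
  ∀ e ∈ H.edges, ∀ f ∈ H.edges, e ≠ f → (e ∩ f).card ≤ d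

/-- The induced subhypergraph `H[U]`. -/
noncomputable def induce (H : Hypergraph' α) (U : Finset α) : Hypergraph' α where
  verts := U
  edges := (H.edges.image (· ∩ U)).filter (· ≠ ∅)
  edge_sub := by
    intro e he
    simp only [Finset.mem_filter, Finset.mem_image] at he
    obtain ⟨⟨f, hf, rfl⟩, -⟩ := he
    exact Finset.inter_subset_right

/-- The adjacency graph of a hypergraph: two distinct vertices are adjacent
iff they lie in a common edge. -/
def adjGraph (H : Hypergraph' α) : SimpleGraph α where
  Adj v w := v ≠ w ∧ ∃ e ∈ H.edges, v ∈ e ∧ w ∈ e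
  symm := by constructor; rintro v w ⟨hne, e, he, hv, hw⟩; exact ⟨hne.symm, e, he, hw, hv⟩
  loopless := by constructor; rintro v ⟨hne, -⟩; exact hne rfl

/-- Adjacency in `H` avoiding the vertex set `S` (i.e. adjacency in `H[V(H) \ S]`). -/
def avoidGraph (H : Hypergraph' α) (S : Finset α) : SimpleGraph α where
  Adj v w := v ≠ w ∧ v ∉ S ∧ w ∉ S ∧ ∃ e ∈ H.edges, v ∈ e ∧ w ∈ e
  symm := by constructor; rintro v w ⟨hne, hv, hw, e, he, h1, h2⟩; exact ⟨hne.symm, hw, hv, e, he, h2, h1⟩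
  loopless := by constructor; rintro v ⟨hne, -⟩; exact hne rfl

/-- `S` is an `(A,B)`-separator of `H`: no path of `H[V(H) \ S]` joins
a vertex of `A \ S` to a vertex of `B \ S`. -/
def IsSeparator (H : Hypergraph' α) (A B S : Finset α) : Prop :=
  ∀ a ∈ A, a ∉ S → ∀ b ∈ B, b ∉ S → ¬ (H.avoidGraph S).Reachable a b

/-- `U` has an edge cover of weight at most `k` (edge cover number `ρ(U) ≤ k`). -/
def CoverLE (H : Hypergraph' α) (U : Finset α) (k : ℕ) : Prop :=
  ∃ F : Finset (Finset α), F ⊆ H.edges ∧ U ⊆ F.biUnion id ∧ F.card ≤ k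

/-- `(T, B)` is a tree decomposition of `H`. -/
def IsTreeDecomp (H : Hypergraph' α) {ι : Type*} (T : SimpleGraph ι) (B : ι → Finset α) : Prop :=
  T.IsTree ∧ (∀ u, B u ⊆ H.verts) ∧ (∀ e ∈ H.edges, ∃ u, e ⊆ B u) ∧
  (∀ v ∈ H.verts, (T.induce {u | v ∈ B u}).Connected)

/-- Generalised hypertree width of `H` is at most `k`. -/
def ghwLE (H : Hypergraph' α) (k : ℕ) : Prop :=
  ∃ (ι : Type) (T : SimpleGraph ι) (B : ι → Finset α),
    H.IsTreeDecomp T B ∧ ∀ u, H.CoverLE (B u) k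

/-- Two subedges are incompatible if their union is not a subedge. -/
def Incompatible (H : Hypergraph' α) (X Y : Finset α) : Prop := ¬ H.IsSubedge (X ∪ Y)

/-- `U₁,…,U_a, S₁,…,S_b` form an `(a,b)` subedge hypergrid (shyg). -/
def IsShyg (H : Hypergraph' α) {a b : ℕ} (U : Fin a → Finset α) (S : Fin b → Finset α) : Prop :=
  (∀ i, H.IsSubedge (U i)) ∧ (∀ j, H.IsSubedge (S j)) ∧
  (∀ i i', i ≠ i' → H.Incompatible (U i) (U i')) ∧
  (∀ j j', j ≠ j' → H.Incompatible (S j) (S j')) ∧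
  (∀ i j, H.Incompatible (U i) (S j)) ∧
  (∀ i i', i ≠ i' → Disjoint (U i) (U i')) ∧
  (∀ j i, (S j ∩ U i).Nonempty)

/-- A strong shyg: additionally the `S j` intersect pairwise disjointly inside `⋃ U i`. -/
def IsStrongShyg (H : Hypergraph' α) {a b : ℕ}
    (U : Fin a → Finset α) (S : Fin b → Finset α) : Prop :=
  H.IsShyg U S ∧ ∀ j j', j ≠ j' → S j ∩ S j' ∩ Finset.univ.biUnion U = ∅

/-- `H` has a strong `(a,b)`-shyg. -/
def HasStrongShyg (H : Hypergraph' α) (a b : ℕ) : Prop :=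
  ∃ (U : Fin a → Finset α) (S : Fin b → Finset α), H.IsStrongShyg U S

/-- `ext(C, E')`: the edges of `E'` meeting `C`. -/
noncomputable def ext (E' : Finset (Finset α)) (C : Finset α) : Finset (Finset α) :=
  E'.filter fun e => (e ∩ C).Nonempty

/-- `C` is (the vertex set of) a connected component of `H`. -/
def IsConnComp (H : Hypergraph' α) (C : Finset α) : Prop :=
  ∃ v ∈ H.verts, ∀ w, w ∈ C ↔ w ∈ H.verts ∧ H.adjGraph.Reachable v w

end Hypergraph'

/-- The vertex set of `T_{x,Y}`: the union of all paths of `G` starting at `x`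
whose second vertex belongs to `Y`. -/
def subtreeVerts {V : Type*} (G : SimpleGraph V) (x : V) (Y : Set V) : Set V :=
  {v | v = x ∨ ∃ w : G.Walk x v, w.IsPath ∧ w.getVert 1 ∈ Y ∧ ¬ w.Nil}

/-- The tree `T⁺_{t,Y}`: the restriction of `T` to `s` together with a fresh node `none`
made adjacent to `t`. -/
def plusGraph {ι : Type*} (T : SimpleGraph ι) (s : Set ι) (t : ι) :
    SimpleGraph (Option s) where
  Adj a b :=
    (∃ u v : s, a = some u ∧ b = some v ∧ T.Adj u v) ∨
    (a = none ∧ ∃ v : s, b = some v ∧ (v : ι) = t) ∨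
    (b = none ∧ ∃ u : s, a = some u ∧ (u : ι) = t)
  symm := by
    constructor
    rintro a b (⟨u, v, rfl, rfl, h⟩ | ⟨rfl, v, rfl, hv⟩ | ⟨rfl, u, rfl, hu⟩)
    · exact Or.inl ⟨v, u, rfl, rfl, h.symm⟩
    · exact Or.inr (Or.inr ⟨rfl, v, rfl, hv⟩)
    · exact Or.inr (Or.inl ⟨rfl, u, rfl, hu⟩)
  loopless := by
    constructor
    rintro a (⟨u, v, rfl, h1, h2⟩ | ⟨rfl, v, h, -⟩ | ⟨rfl, u, h, -⟩)
    · obtain rfl : u = v := Option.some_injective _ h1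
      exact T.loopless.irrefl _ h2
    · cases h
    · cases h

/-- `ξ'(n,k,d)` from the paper. -/
def xi' (k d : ℕ) : ℕ → ℕ
  | 0 => (3*k+1)*d+1
  | n+1 => ((3*k+1)*d)^2 * xi' k d n + 1
theorem shyg_separator_lower_bound {α : Type*} (H : Hypergraph' α) (d : ℕ)
    (h2d : H.Is2dHypergraph d) (b : ℕ)
    (U1 U2 : Finset α) (S : Fin b → Finset α)
    (hU1 : H.IsSubedge U1) (hU2 : H.IsSubedge U2) (hS : ∀ j, H.IsSubedge (S j))
    (hinc12 : H.Incompatible U1 U2)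
    (hinc1S : ∀ j, H.Incompatible U1 (S j))
    (hinc2S : ∀ j, H.Incompatible U2 (S j))
    (hincSS : ∀ j j', j ≠ j' → H.Incompatible (S j) (S j'))
    (hdisj : Disjoint U1 U2)
    (htouch : ∀ j, (S j ∩ U1).Nonempty ∧ (S j ∩ U2).Nonempty)
    (hSij : ∀ i j : Fin b, i ≠ j → U1 ∩ S i ∩ S j = ∅ ∧ U2 ∩ S i ∩ S j = ∅)
    (r : ℕ) (e : Fin r → Finset α) (he : ∀ i, e i ∈ H.edges)
    (hwit : ∀ i, ¬ U1 ⊆ e i ∧ ¬ U2 ⊆ e i)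
    (hsep : H.IsSeparator U1 U2 (Finset.univ.biUnion e)) :
    b ≤ 2 * d * r := by
  classical
  set W := Finset.univ.biUnion e with hW
  have key : ∀ j : Fin b, ∃ v, v ∈ (U1 ∪ U2) ∧ v ∈ S j ∧ v ∈ W := by
    intro j
    obtain ⟨x, hx⟩ := (htouch j).1
    obtain ⟨y, hy⟩ := (htouch j).2
    simp only [Finset.mem_inter] at hx hy
    by_cases hxW : x ∈ W
    · exact ⟨x, Finset.mem_union_left _ hx.2, hx.1, hxW⟩
    by_cases hyW : y ∈ W
    · exact ⟨y, Finset.mem_union_right _ hy.2, hy.1, hyW⟩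
    exfalso
    obtain ⟨f, hf, hSf⟩ := hS j
    have hxy : x ≠ y := fun h => (Finset.disjoint_left.mp hdisj hx.2 (h ▸ hy.2))
    exact hsep x hx.2 hxW y hy.2 hyW
      (SimpleGraph.Adj.reachable ⟨hxy, hxW, hyW, f, hf, hSf hx.1, hSf hy.1⟩)
  choose v hv1 hv2 hv3 using key
  have hinj : Function.Injective v := by
    intro j j' hvv
    by_contra hne
    have hvj' : v j ∈ S j' := by rw [hvv]; exact hv2 j'
    rcases Finset.mem_union.mp (hv1 j) with h1 | h1
    · have hmem : v j ∈ U1 ∩ S j ∩ S j' := by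
        simp [Finset.mem_inter, h1, hv2 j, hvj']
      rw [(hSij j j' hne).1] at hmem
      exact Finset.notMem_empty _ hmem
    · have hmem : v j ∈ U2 ∩ S j ∩ S j' := by
        simp [Finset.mem_inter, h1, hv2 j, hvj']
      rw [(hSij j j' hne).2] at hmem
      exact Finset.notMem_empty _ hmem
  have hcard : ∀ (U : Finset α), H.IsSubedge U → (∀ i, ¬ U ⊆ e i) →
      ∀ i, (U ∩ e i).card ≤ d := by
    intro U hU hwU i
    obtain ⟨f, hf, hUf⟩ := hU
    have hne : f ≠ e i := fun h => hwU i (h ▸ hUf)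
    calc (U ∩ e i).card ≤ (f ∩ e i).card :=
          Finset.card_le_card (Finset.inter_subset_inter hUf le_rfl)
      _ ≤ d := h2d f hf (e i) (he i) hne
  have hb : b ≤ ((U1 ∪ U2) ∩ W).card := by
    have := Finset.card_le_card_of_injOn (s := (Finset.univ : Finset (Fin b))) v
      (fun j _ => Finset.mem_inter.mpr ⟨hv1 j, hv3 j⟩) (Set.injOn_of_injective hinj)
    simpa using this
  have hsub : (U1 ∪ U2) ∩ W ⊆ Finset.univ.biUnion (fun i => (U1 ∪ U2) ∩ e i) := by
    intro x hx
    obtain ⟨hx1, hx2⟩ := Finset.mem_inter.mp hx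
    obtain ⟨i, -, hxi⟩ := Finset.mem_biUnion.mp hx2
    exact Finset.mem_biUnion.mpr ⟨i, Finset.mem_univ _, Finset.mem_inter.mpr ⟨hx1, hxi⟩⟩
  calc b ≤ ((U1 ∪ U2) ∩ W).card := hb
    _ ≤ (Finset.univ.biUnion (fun i => (U1 ∪ U2) ∩ e i)).card :=
        Finset.card_le_card hsub
    _ ≤ ∑ i, ((U1 ∪ U2) ∩ e i).card := Finset.card_biUnion_le
    _ ≤ ∑ i : Fin r, (2 * d) := by
        apply Finset.sum_le_sum
        intro i _
        have : (U1 ∪ U2) ∩ e i = (U1 ∩ e i) ∪ (U2 ∩ e i) := by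
          rw [Finset.union_inter_distrib_right]
        rw [this]
        calc ((U1 ∩ e i) ∪ (U2 ∩ e i)).card
            ≤ (U1 ∩ e i).card + (U2 ∩ e i).card := Finset.card_union_le _ _
          _ ≤ d + d := Nat.add_le_add
              (hcard U1 hU1 (fun i => (hwit i).1) i)
              (hcard U2 hU2 (fun i => (hwit i).2) i)
          _ = 2 * d := (Nat.two_mul d).symm
    _ = 2 * d * r := by simp [Finset.sum_const, Nat.mul_comm]
end

section
/- Let $U_1, \dots, U_a, S_1, \dots, S_b$ be an $(a,b)$-subedge hypergrid of a $(2,d)$-hypergraph $H$. For each vertex $v \in \bigcup_{i=1}^a U_i$, let $I(v)$ be the set of indices $j$ with $v \in S_j$. Assume there is $r > 0$ with $(a \cdot d)^2 r < b$ and $|I(v)| \leq r$ for every $v \in \bigcup_{i=1}^a U_i$. Then $H$ has a strong $(a, ad+1)$-subedge hypergrid. -/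
open Finset

open scoped Classical

variable {α : Type*}

lemma aux_pick_disjoint {β : Type*} {b : ℕ} (m r : ℕ) (hrb : m ^ 2 * r < b)
    (T : Fin b → Finset β)
    (hcard : ∀ j, (T j).card ≤ m)
    (hmult : ∀ j (v : β), v ∈ T j →
      (Finset.univ.filter (fun j' : Fin b => v ∈ T j')).card ≤ r)
    (hne : 1 ≤ m → ∀ j, (T j).Nonempty) :
    ∃ J : Finset (Fin b), J.card = m + 1 ∧
      ∀ j ∈ J, ∀ j' ∈ J, j ≠ j' → T j ∩ T j' = ∅ := by
  classical
  suffices h : ∀ k, k ≤ m + 1 → ∃ J : Finset (Fin b), J.card = k ∧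
      ∀ j ∈ J, ∀ j' ∈ J, j ≠ j' → T j ∩ T j' = ∅ by exact h (m+1) le_rfl
  intro k hk
  induction k with
  | zero => exact ⟨∅, rfl, by simp⟩
  | succ k ih =>
    have hkm : k ≤ m := Nat.succ_le_succ_iff.mp hk
    obtain ⟨J, hJcard, hJdisj⟩ := ih (le_of_lt hk)
    set B : Finset (Fin b) :=
      J.biUnion (fun t => (T t).biUnion
        (fun v => Finset.univ.filter (fun j => v ∈ T j))) with hB
    have hmemB : ∀ {j t : Fin b} {v : β}, t ∈ J → v ∈ T t → v ∈ T j → j ∈ B := by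
      intro j t v ht hv hvj
      simp only [hB, Finset.mem_biUnion, Finset.mem_filter, Finset.mem_univ, true_and]
      exact ⟨t, ht, v, hv, hvj⟩
    have hBcard : B.card < b := by
      calc B.card ≤ ∑ t ∈ J, ((T t).biUnion
              (fun v => Finset.univ.filter (fun j => v ∈ T j))).card :=
            Finset.card_biUnion_le
        _ ≤ ∑ t ∈ J, m * r := by
            apply Finset.sum_le_sum
            intro t _
            calc ((T t).biUnion (fun v => Finset.univ.filter (fun j => v ∈ T j))).card
                ≤ ∑ v ∈ T t, (Finset.univ.filter (fun j => v ∈ T j)).card :=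
                  Finset.card_biUnion_le
              _ ≤ ∑ _v ∈ T t, r := Finset.sum_le_sum fun v hv => hmult t v hv
              _ = (T t).card * r := by rw [Finset.sum_const, smul_eq_mul]
              _ ≤ m * r := Nat.mul_le_mul_right r (hcard t)
        _ = k * (m * r) := by rw [Finset.sum_const, hJcard, smul_eq_mul]
        _ ≤ m * (m * r) := Nat.mul_le_mul_right _ hkm
        _ = m ^ 2 * r := by ring
        _ < b := hrb
    have hcompl : Bᶜ.Nonempty := by
      rw [← Finset.card_pos, Finset.card_compl, Fintype.card_fin]
      omega
    obtain ⟨j, hj⟩ := hcompl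
    have hjB : j ∉ B := Finset.mem_compl.mp hj
    have hjJ : j ∉ J := by
      intro hjJ
      have hm1 : 1 ≤ m := le_trans (Finset.card_pos.mpr ⟨j, hjJ⟩) (hJcard ▸ hkm)
      obtain ⟨v, hv⟩ := hne hm1 j
      exact hjB (hmemB hjJ hv hv)
    refine ⟨insert j J, by rw [Finset.card_insert_of_notMem hjJ, hJcard], ?_⟩
    intro j₁ h1 j₂ h2 hne'
    rw [← Finset.not_nonempty_iff_eq_empty]
    rintro ⟨v, hv⟩
    rw [Finset.mem_inter] at hv
    rcases Finset.mem_insert.mp h1 with rfl | h1'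
    · rcases Finset.mem_insert.mp h2 with rfl | h2'
      · exact hne' rfl
      · exact hjB (hmemB h2' hv.2 hv.1)
    · rcases Finset.mem_insert.mp h2 with rfl | h2'
      · exact hjB (hmemB h1' hv.1 hv.2)
      · exact absurd hv.1 (by
          have := hJdisj j₁ h1' j₂ h2' hne'
          intro hmem
          have : v ∈ T j₁ ∩ T j₂ := Finset.mem_inter.mpr ⟨hmem, hv.2⟩
          simp_all)

theorem strong_shyg_of_low_multiplicity {α : Type*} (H : Hypergraph' α) (d : ℕ)
    (h2d : H.Is2dHypergraph d) (a b : ℕ)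
    (U : Fin a → Finset α) (S : Fin b → Finset α) (hshyg : H.IsShyg U S)
    (r : ℕ) (hr : 0 < r) (hrb : (a * d) ^ 2 * r < b)
    (hI : ∀ v ∈ Finset.univ.biUnion U,
      (Finset.univ.filter (fun j : Fin b => v ∈ S j)).card ≤ r) :
    H.HasStrongShyg a (a * d + 1) := by
  classical
  obtain ⟨hUsub, hSsub, hUinc, hSinc, hUSinc, hUdisj, hSU⟩ := hshyg
  set BU : Finset α := Finset.univ.biUnion U with hBU
  set T : Fin b → Finset α := fun j => S j ∩ BU with hT
  -- each trace has size at most a*d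
  have htrace : ∀ j i, (S j ∩ U i).card ≤ d := by
    intro j i
    obtain ⟨e, he, hUe⟩ := hUsub i
    obtain ⟨f, hf, hSf⟩ := hSsub j
    have hef : e ≠ f := by
      rintro rfl
      exact hUSinc i j ⟨e, he, Finset.union_subset hUe hSf⟩
    have hsub : S j ∩ U i ⊆ f ∩ e :=
      Finset.inter_subset_inter hSf hUe
    calc (S j ∩ U i).card ≤ (f ∩ e).card := Finset.card_le_card hsub
      _ ≤ d := h2d f hf e he (Ne.symm hef)
  have hcard : ∀ j, (T j).card ≤ a * d := by
    intro j
    have hsub : T j ⊆ Finset.univ.biUnion (fun i => S j ∩ U i) := by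
      intro v hv
      rw [hT] at hv
      simp only [Finset.mem_inter] at hv
      rw [hBU, Finset.mem_biUnion] at hv
      obtain ⟨hvS, i, _, hvU⟩ := hv
      exact Finset.mem_biUnion.mpr ⟨i, Finset.mem_univ i, Finset.mem_inter.mpr ⟨hvS, hvU⟩⟩
    calc (T j).card ≤ (Finset.univ.biUnion (fun i => S j ∩ U i)).card :=
          Finset.card_le_card hsub
      _ ≤ ∑ i : Fin a, (S j ∩ U i).card := Finset.card_biUnion_le
      _ ≤ ∑ _i : Fin a, d := Finset.sum_le_sum fun i _ => htrace j i
      _ = a * d := by simp [Finset.sum_const, mul_comm]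
  have hmult : ∀ j (v : α), v ∈ T j →
      (Finset.univ.filter (fun j' : Fin b => v ∈ T j')).card ≤ r := by
    intro j v hv
    rw [hT] at hv
    have hvBU : v ∈ BU := (Finset.mem_inter.mp hv).2
    calc (Finset.univ.filter (fun j' : Fin b => v ∈ T j')).card
        ≤ (Finset.univ.filter (fun j' : Fin b => v ∈ S j')).card := by
          apply Finset.card_le_card
          intro j' hj'
          rw [Finset.mem_filter] at hj' ⊢
          exact ⟨hj'.1, (Finset.mem_inter.mp (hT ▸ hj'.2)).1⟩
      _ ≤ r := hI v hvBU
  have hne : 1 ≤ a * d → ∀ j, (T j).Nonempty := by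
    intro hm j
    have ha : 0 < a := Nat.pos_of_ne_zero (by rintro rfl; simp at hm)
    obtain ⟨v, hv⟩ := hSU j ⟨0, ha⟩
    rw [Finset.mem_inter] at hv
    exact ⟨v, Finset.mem_inter.mpr ⟨hv.1,
      Finset.mem_biUnion.mpr ⟨⟨0, ha⟩, Finset.mem_univ _, hv.2⟩⟩⟩
  obtain ⟨J, hJcard, hJdisj⟩ := aux_pick_disjoint (a * d) r hrb T hcard hmult hne
  set g := J.orderEmbOfFin hJcard with hg
  have hgmem : ∀ i, g i ∈ J := fun i => J.orderEmbOfFin_mem hJcard i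
  refine ⟨U, fun i => S (g i), ?_, ?_⟩
  · refine ⟨hUsub, fun j => hSsub _, hUinc, ?_, fun i j => hUSinc i (g j), hUdisj,
      fun j i => hSU (g j) i⟩
    intro j j' hjj'
    exact hSinc (g j) (g j') (fun h => hjj' (g.injective h))
  · intro j j' hjj'
    have hg' : g j ≠ g j' := fun h => hjj' (g.injective h)
    have hd := hJdisj (g j) (hgmem j) (g j') (hgmem j') hg'
    rw [← Finset.not_nonempty_iff_eq_empty]
    rintro ⟨v, hv⟩
    simp only [Finset.mem_inter] at hv
    have : v ∈ T (g j) ∩ T (g j') := by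
      rw [hT, Finset.mem_inter, Finset.mem_inter, Finset.mem_inter]
      exact ⟨⟨hv.1.1, hv.2⟩, hv.1.2, hv.2⟩
    simp_all
end
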